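/- In the witness game with players A, B_1, ..., B_{N−1}, all with strategy space [0,1], where θ_{B_i}(a, b_1,...,b_{N−1}) = b_i and θ_A(a, b) = a if a + max(b_1,...,b_{N−1}) < 1 and 0 otherwise, every global strategy of the form (a, 1, 1, ..., 1) with a ∈ [0,1] is an (N−1)-lateral Nash equilibrium, but no global strategy is an N-lateral Nash equilibrium. -/
import Mathlib


def replaceOn {N : ℕ} {E : Fin N → Type*} (x y : ∀ i, E i) (I : Finset (Fin N)) :
    ∀ i, E i := fun i => if i ∈ I then y i else x i

def IsLateralNash {N : ℕ} {E : Fin N → Type*} (θ : Fin N → (∀ i, E i) → ℝ)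
    (k : ℕ) (x : ∀ i, E i) : Prop :=
  ∀ I : Finset (Fin N), I.card = k → ∀ i ∈ I, ∀ y : ∀ j, E j,
    θ i (replaceOn x y I) ≤ θ i x

/-- The witness game with `M + 2` players: player `0` is the suspect `A`, the other
players are the witnesses `B_i`. Every strategy space is `[0,1]`. -/
noncomputable def witnessTheta (M : ℕ) :
    Fin (M + 2) → (Fin (M + 2) → Set.Icc (0 : ℝ) 1) → ℝ := fun i x =>
  if i = 0 then
    (if (x 0 : ℝ) + (⨆ j : {j : Fin (M + 2) // j ≠ 0}, (x j.1 : ℝ)) < 1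
      then (x 0 : ℝ) else 0)
  else (x i : ℝ)

lemma aux_ne (M : ℕ) : Nonempty {j : Fin (M + 2) // j ≠ 0} :=
  ⟨⟨1, by simp [Fin.ext_iff]⟩⟩

lemma aux_bdd (M : ℕ) (x : Fin (M + 2) → Set.Icc (0 : ℝ) 1) :
    BddAbove (Set.range fun j : {j : Fin (M + 2) // j ≠ 0} => (x j.1 : ℝ)) :=
  (Set.finite_range _).bddAbove

lemma wt0 (M : ℕ) (x : Fin (M + 2) → Set.Icc (0 : ℝ) 1) :
    witnessTheta M 0 x =
      if (x 0 : ℝ) + (⨆ j : {j : Fin (M + 2) // j ≠ 0}, (x j.1 : ℝ)) < 1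
        then (x 0 : ℝ) else 0 := by
  simp [witnessTheta]

lemma wti (M : ℕ) (i : Fin (M + 2)) (hi : i ≠ 0) (x : Fin (M + 2) → Set.Icc (0 : ℝ) 1) :
    witnessTheta M i x = (x i : ℝ) := by
  simp [witnessTheta, hi]

/-- In the witness game with `N = M + 2` players, every profile `(a, 1, …, 1)` is an
`(N-1)`-lateral Nash equilibrium, but no profile is an `N`-lateral Nash equilibrium. -/
theorem stmt13 (M : ℕ) :
    (∀ a : Set.Icc (0 : ℝ) 1,
      IsLateralNash (witnessTheta M) (M + 1)
        (fun j => if j = 0 then a else ⟨1, by norm_num⟩)) ∧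
    ¬ ∃ x : Fin (M + 2) → Set.Icc (0 : ℝ) 1,
        IsLateralNash (witnessTheta M) (M + 2) x := by
  haveI := aux_ne M
  constructor
  · intro a I hI i hiI y
    set x : Fin (M + 2) → Set.Icc (0 : ℝ) 1 :=
      fun j => if j = 0 then a else ⟨1, by norm_num⟩ with hxdef
    by_cases h0 : i = 0
    · subst h0
      -- there is a player outside I
      have hne : ∃ j0, j0 ∉ I := by
        by_contra h
        push_neg at h
        have := Finset.eq_univ_iff_forall.mpr h
        rw [this, Finset.card_univ] at hI
        simp at hI
      obtain ⟨j0, hj0⟩ := hne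
      have hj00 : j0 ≠ 0 := fun h => hj0 (h ▸ hiI)
      have hxθ : witnessTheta M 0 x = 0 := by
        have hsup : (⨆ j : {j : Fin (M + 2) // j ≠ 0}, (x j.1 : ℝ)) = 1 := by
          have h1 : (fun j : {j : Fin (M + 2) // j ≠ 0} => (x j.1 : ℝ)) =
              fun _ => (1 : ℝ) := by
            funext j
            simp [hxdef, j.2]
          rw [h1, ciSup_const]
        have hx0 : (x 0 : ℝ) = a := by simp [hxdef]
        rw [wt0, hsup, hx0, if_neg]
        have := a.2.1
        linarith
      rw [hxθ]
      set z := replaceOn x y I with hz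
      have hzj0 : (z j0 : ℝ) = 1 := by
        simp [hz, replaceOn, if_neg hj0, hxdef, hj00]
      have hsup : (1 : ℝ) ≤ ⨆ j : {j : Fin (M + 2) // j ≠ 0}, (z j.1 : ℝ) := by
        have := le_ciSup (aux_bdd M z) (⟨j0, hj00⟩ : {j : Fin (M + 2) // j ≠ 0})
        rw [hzj0] at this
        exact this
      rw [wt0, if_neg]
      have := (z 0).2.1
      linarith
    · -- i ≠ 0 : payoff is its own coordinate, at most 1
      have hxi : (x i : ℝ) = 1 := by simp [hxdef, h0]
      rw [wti M i h0, wti M i h0, hxi]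
      exact (replaceOn x y I i).2.2
  · rintro ⟨x, hx⟩
    set t := witnessTheta M 0 x with ht
    have ht0 : 0 ≤ t := by
      rw [ht, wt0]
      split
      · exact (x 0).2.1
      · exact le_refl 0
    have ht1 : t < 1 := by
      rw [ht, wt0]
      split
      · rename_i h
        have hsup : (0 : ℝ) ≤ ⨆ j : {j : Fin (M + 2) // j ≠ 0}, (x j.1 : ℝ) := by
          obtain ⟨j⟩ := aux_ne M
          have h2 := le_ciSup (aux_bdd M x) j
          have h3 := (x j.1).2.1
          linarith
        linarith
      · norm_num
    set y : Fin (M + 2) → Set.Icc (0 : ℝ) 1 :=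
      fun j => if j = 0 then ⟨(1 + t) / 2, by constructor <;> nlinarith⟩
        else ⟨0, by norm_num⟩ with hydef
    have hrep : replaceOn x y Finset.univ = y := by
      funext j
      simp [replaceOn]
    have hcard : (Finset.univ : Finset (Fin (M + 2))).card = M + 2 := by simp
    have hle := hx Finset.univ hcard 0 (Finset.mem_univ _) y
    rw [hrep] at hle
    have hθy : witnessTheta M 0 y = (1 + t) / 2 := by
      have hsup : (⨆ j : {j : Fin (M + 2) // j ≠ 0}, (y j.1 : ℝ)) = 0 := by
        have h1 : (fun j : {j : Fin (M + 2) // j ≠ 0} => (y j.1 : ℝ)) =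
            fun _ => (0 : ℝ) := by
          funext j
          simp [hydef, j.2]
        rw [h1, ciSup_const]
      have hy0 : (y 0 : ℝ) = (1 + t) / 2 := by simp [hydef]
      rw [wt0, hsup, hy0, if_pos (by linarith)]
    rw [hθy, ← ht] at hle
    linarith
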